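/- For every cyclic group G of order n ≥ 3 and for every integer m ≥ 5, G has an m-GRR. (In fact, the automorphism group of the explicitly constructed graph Δ on G×{0,…,m−1} described below is exactly the group of right translations by G.) -/

import Mathlib

/-- A permutation `σ` of the vertex set is an automorphism of the simple graph `Γ`. -/
def IsGraphAut {V : Type*} (Γ : SimpleGraph V) (σ : Equiv.Perm V) : Prop :=
  ∀ u v : V, Γ.Adj (σ u) (σ v) ↔ Γ.Adj u v

/-- `G` admits an `m`-graphical regular representation: a regular finite simple graph whose
full automorphism group is (the image of) `G`, acting semiregularly with exactly `m` orbits. -/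
def HasMGRR (G : Type*) [Group G] (m : ℕ) : Prop :=
  ∃ (V : Type) (_ : Fintype V) (Γ : SimpleGraph V) (ρ : G →* Equiv.Perm V),
    (∃ d : ℕ, ∀ v : V, (Γ.neighborSet v).ncard = d) ∧
    (∀ g : G, IsGraphAut Γ (ρ g)) ∧
    (∀ σ : Equiv.Perm V, IsGraphAut Γ σ → ∃ g : G, ρ g = σ) ∧
    Function.Injective ⇑ρ ∧
    (∀ (g : G) (v : V), ρ g v = v → g = 1) ∧
    (∃ reps : Fin m → V, ∀ v : V, ∃! i : Fin m, ∃ g : G, ρ g (reps i) = v)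

/-- The graph `Δ` on `G × {0,…,m−1}` for a cyclic group `G = ⟨x⟩` and `δ` with
`gcd(1+δ, |G|) = 1`: blocks `G_1`, `G_2` are complete, `G_0`, `G_3` are empty, `G_i` is the
cycle `{g,(xg)}` for `4 ≤ i`; between blocks: `g_0 ~ g'_2` iff `g ≠ g'`; `g_2 ~ g'_3` iff
`g = g'`; `g_3 ~ g'_{m−1}` iff `g ≠ g'`; `g_1 ~ g'_4` iff `g ≠ g'`; `g_ℓ ~ g'_{ℓ+1}` iff
`g ≠ g'` for `4 ≤ ℓ ≤ m−2`; `g_0 ~ g'_3` always; `g_0 ~ g'_1` iff `g'g⁻¹ = x`;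
`g_1 ~ g'_2` iff `g'g⁻¹ = x^δ`. -/
def DeltaCyc (G : Type*) [Group G] (m : ℕ) (x : G) (δ : ℕ) :
    SimpleGraph (G × Fin m) :=
  SimpleGraph.fromRel (fun p q =>
    (p.2.val = 1 ∧ q.2.val = 1 ∧ p.1 ≠ q.1) ∨
    (p.2.val = 2 ∧ q.2.val = 2 ∧ p.1 ≠ q.1) ∨
    (4 ≤ p.2.val ∧ p.2 = q.2 ∧ q.1 = x * p.1) ∨
    (p.2.val = 0 ∧ q.2.val = 2 ∧ p.1 ≠ q.1) ∨
    (p.2.val = 2 ∧ q.2.val = 3 ∧ p.1 = q.1) ∨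
    (p.2.val = 3 ∧ q.2.val = m - 1 ∧ p.1 ≠ q.1) ∨
    (p.2.val = 1 ∧ q.2.val = 4 ∧ p.1 ≠ q.1) ∨
    (4 ≤ p.2.val ∧ p.2.val ≤ m - 2 ∧ q.2.val = p.2.val + 1 ∧ p.1 ≠ q.1) ∨
    (p.2.val = 0 ∧ q.2.val = 3) ∨
    (p.2.val = 0 ∧ q.2.val = 1 ∧ q.1 * p.1⁻¹ = x) ∨
    (p.2.val = 1 ∧ q.2.val = 2 ∧ q.1 * p.1⁻¹ = x ^ δ))

/-!
Right translations clearly preserve `Δ`, and a direct count gives every vertex degree `2n`.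
For rigidity let `σ` be an automorphism. The only edges of `Δ` lying in no triangle are the
matching edges `g₀ g₃`, so `σ` preserves `G₀ ∪ G₃`. A vertex of `G₃` has a neighbour outside
`G₀ ∪ G₃` (its partner in `G₂`) with which it has no common neighbour outside `G₀ ∪ G₃`,
while a vertex of `G₀` has no such neighbour; hence `σ` maps each of `G₀, G₂, G₃` to itself,
by one bijection `φ` of `G`. The unique neighbour of `g₀` outside `G₀ ∪ G₂ ∪ G₃` is `(xg)₁`,
and the unique neighbour of `(xg)₁` in `G₂` is `(x^δ x g)₂`; so `φ (x^(1+δ) g) = x^(1+δ) φ g`,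
and as `x^(1+δ)` generates `G`, `φ` is right multiplication by `φ 1`. The blocks
`G₄, …, G_{m-1}` then follow one at a time along the path `G₁ – G₄ – ⋯ – G_{m-1}`: the previous
block has no neighbours beyond `G_k`, and `g_k` is the only vertex of `G_k` not adjacent to the
vertex `g` of the previous block.
-/

section GraphAut

variable {V : Type*} {Γ : SimpleGraph V} {σ : Equiv.Perm V}

theorem IsGraphAut.symm (hσ : IsGraphAut Γ σ) : IsGraphAut Γ σ.symm := fun u v => by
  rw [← hσ, Equiv.apply_symm_apply, Equiv.apply_symm_apply]

theorem IsGraphAut.apply_iff {P : V → Prop} (hP : ∀ τ, IsGraphAut Γ τ → ∀ v, P v → P (τ v))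
    (hσ : IsGraphAut Γ σ) (v : V) : P (σ v) ↔ P v :=
  ⟨fun h => by simpa using hP _ hσ.symm _ h, hP σ hσ v⟩

theorem IsGraphAut.commonNeighbors_apply (hσ : IsGraphAut Γ σ) (p q : V) :
    Γ.commonNeighbors (σ p) (σ q) = σ '' Γ.commonNeighbors p q := by
  ext u
  rw [σ.image_eq_preimage_symm, Set.mem_preimage, SimpleGraph.mem_commonNeighbors,
    SimpleGraph.mem_commonNeighbors, ← hσ p, ← hσ q, Equiv.apply_symm_apply]

theorem IsGraphAut.adj_and_commonNeighbors_eq_empty_iff (hσ : IsGraphAut Γ σ) (p q : V) :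
    (Γ.Adj (σ p) (σ q) ∧ Γ.commonNeighbors (σ p) (σ q) = ∅) ↔
      (Γ.Adj p q ∧ Γ.commonNeighbors p q = ∅) := by
  rw [hσ, hσ.commonNeighbors_apply, Set.image_eq_empty]

theorem IsGraphAut.adj_and_commonNeighbors_subset_iff (hσ : IsGraphAut Γ σ) {s : Set V}
    (hs : σ '' s = s) (p q : V) :
    (Γ.Adj (σ p) (σ q) ∧ Γ.commonNeighbors (σ p) (σ q) ⊆ s) ↔
      (Γ.Adj p q ∧ Γ.commonNeighbors p q ⊆ s) := by
  rw [hσ, hσ.commonNeighbors_apply, ← hs, Set.image_subset_image_iff σ.injective, hs]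

end GraphAut

theorem exists_ne_ne_of_three_le_natCard {α : Type*} (h : 3 ≤ Nat.card α) (a b : α) :
    ∃ c, c ≠ a ∧ c ≠ b :=
  have : Finite α := Nat.finite_of_card_ne_zero (by omega)
  ENat.exists_ne_ne_of_three_le (by simpa [ENat.card_eq_coe_natCard] using h) a b

open Subgroup in
theorem zpowers_pow_eq_top_of_coprime {G : Type*} [Group G] {x : G} (hx : zpowers x = ⊤) {k : ℕ}
    (hk : k.Coprime (Nat.card G)) : zpowers (x ^ k) = ⊤ := by
  rw [← orderOf_eq_card_of_zpowers_eq_top hx] at hk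
  obtain ⟨l, hl⟩ := exists_pow_eq_self_of_coprime hk
  have hmem := pow_mem (mem_zpowers (x ^ k)) l
  rw [hl] at hmem
  rwa [eq_top_iff, ← hx, zpowers_le]

open Subgroup in
theorem eq_mul_apply_one_of_apply_mul_left {G : Type*} [Group G] [Finite G] {y : G}
    (hy : zpowers y = ⊤) {φ : G → G} (hφ : ∀ g, φ (y * g) = y * φ g) (g : G) :
    φ g = g * φ 1 := by
  obtain ⟨k, rfl⟩ : ∃ k : ℕ, y ^ k = g := mem_powers_iff_mem_zpowers.mpr (hy ▸ mem_top g)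
  induction k with
  | zero => simp
  | succ k ih => rw [pow_succ', mul_assoc, hφ, ih]

theorem exists_ne_and_cycle_adj {G : Type*} [Group G] {x : G} (hx2 : x * x ≠ 1) (g h : G) :
    ∃ k, k ≠ g ∧ (k = x * h ∨ h = x * k) := by
  by_cases hg : x * h = g
  · refine ⟨x⁻¹ * h, fun hk => hx2 ?_, Or.inr (mul_inv_cancel_left x h).symm⟩
    exact inv_eq_iff_mul_eq_one.mp (mul_right_cancel (hk.trans hg.symm))
  · exact ⟨x * h, hg, Or.inl rfl⟩

theorem ncard_compl_singleton {α : Type*} [Finite α] (a : α) :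
    ({a}ᶜ : Set α).ncard = Nat.card α - 1 := by
  rw [Set.ncard_compl, Set.ncard_singleton]

theorem ncard_union_prod_singleton {α β : Type*} [Finite α] [Finite β] {A : Set (α × β)}
    (B : Set α) {b : β} (hA : ∀ v ∈ A, v.2 ≠ b) : (A ∪ B ×ˢ {b}).ncard = A.ncard + B.ncard := by
  rw [Set.ncard_union_eq (Set.disjoint_left.2 fun v hv hv' => hA v hv (Set.mem_prod.1 hv').2),
    Set.ncard_prod, Set.ncard_singleton, mul_one]

def mulRightPerm (G : Type*) [Group G] (m : ℕ) : G →* Equiv.Perm (G × Fin m) :=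
  MonoidHom.mk' (fun g => (Equiv.mulRight g⁻¹).prodCongr (Equiv.refl _)) fun a b => by
    ext ⟨h, i⟩ <;> simp [mul_assoc]

theorem hasMGRR_of_forall_isGraphAut {G : Type*} [Group G] [Finite G] {m : ℕ} (hm : 0 < m)
    (Γ : SimpleGraph (G × Fin m)) (d : ℕ) (hreg : ∀ v, (Γ.neighborSet v).ncard = d)
    (hmul : ∀ (g : G) (p q : G × Fin m), Γ.Adj (p.1 * g, p.2) (q.1 * g, q.2) ↔ Γ.Adj p q)
    (hrigid : ∀ σ : Equiv.Perm (G × Fin m), IsGraphAut Γ σ →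
      ∃ g : G, ∀ p : G × Fin m, σ p = (p.1 * g, p.2)) :
    HasMGRR G m := by
  -- `HasMGRR` asks for a vertex type in `Type`, so the graph is moved to `Fin N` along `e`.
  let e := Finite.equivFin (G × Fin m)
  let ρ : G →* Equiv.Perm (Fin (Nat.card (G × Fin m))) :=
    e.permCongrHom.toMonoidHom.comp (mulRightPerm G m)
  have hρ (g : G) (v) : ρ g v = e ((e.symm v).1 * g⁻¹, (e.symm v).2) := rfl
  have hfree (g : G) (v) (hv : ρ g v = v) : g = 1 := by
    rw [hρ, ← e.eq_symm_apply, Prod.ext_iff, mul_eq_left, inv_eq_one] at hv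
    exact hv.1
  refine ⟨_, inferInstance, Γ.comap e.symm, ρ, ⟨d, fun v => ?_⟩, fun g u v => ?_,
    fun σ hσ => ?_, (injective_iff_map_eq_one ρ).2 fun g hg => ?_, hfree,
    ⟨fun i => e (1, i), fun v => ⟨(e.symm v).2, ⟨(e.symm v).1⁻¹, ?_⟩, ?_⟩⟩⟩
  · rw [SimpleGraph.neighborSet_comap, Set.ncard_preimage_of_injective_subset_range
      e.symm.injective (by simp), hreg]
  · simp only [hρ, SimpleGraph.comap_adj, Equiv.symm_apply_apply]
    exact hmul g⁻¹ (e.symm u) (e.symm v)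
  · obtain ⟨g, hg⟩ := hrigid (e.symm.permCongr σ) fun p q => by
      simpa using hσ (e p) (e q)
    refine ⟨g⁻¹, Equiv.ext fun v => ?_⟩
    rw [hρ, inv_inv, ← hg, Equiv.permCongr_apply, Equiv.symm_symm, Equiv.apply_symm_apply,
      Equiv.apply_symm_apply]
  · exact hfree g (e (1, ⟨0, hm⟩)) (by rw [hg]; rfl)
  · rw [hρ, Equiv.symm_apply_apply, inv_inv, one_mul, Equiv.apply_symm_apply]
  · rintro i ⟨g, rfl⟩
    rw [hρ, Equiv.symm_apply_apply, Equiv.symm_apply_apply]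

namespace DeltaCyc

variable {G : Type*} [Group G] {x : G} {m δ : ℕ} {g h : G} {i j : Fin m}

def blocks (G : Type*) (m : ℕ) (s : Set ℕ) : Set (G × Fin m) := {v | v.2.val ∈ s}

/- Consecutive blocks of the path `G₁ – G₄ – G₅ – ⋯ – G_{m-1} – G₃` are joined by `g ≠ g'`;
these are the blocks before and after `G_k` on it, for `k ≥ 4`. -/
def lowerBlock (k : ℕ) : ℕ := if k = 4 then 1 else k - 1

def upperBlock (m k : ℕ) : ℕ := if k = m - 1 then 3 else k + 1

theorem adj_mul_right_iff (a : G) (p q : G × Fin m) :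
    (DeltaCyc G m x δ).Adj (p.1 * a, p.2) (q.1 * a, q.2) ↔ (DeltaCyc G m x δ).Adj p q := by
  have hcycle : ∀ b c : G, b * a = x * (c * a) ↔ b = x * c := fun b c => by
    rw [← mul_assoc, mul_left_inj]
  simp only [DeltaCyc, SimpleGraph.fromRel_adj, ne_eq, Prod.ext_iff, mul_left_inj, hcycle,
    mul_inv_rev, mul_assoc, mul_inv_cancel_left]

theorem adj_iff_of_val_eq_zero (hi : i.val = 0) :
    (DeltaCyc G m x δ).Adj (g, i) (h, j) ↔
      j.val = 3 ∨ (j.val = 2 ∧ h ≠ g) ∨ (j.val = 1 ∧ h = x * g) := by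
  simp only [DeltaCyc, SimpleGraph.fromRel_adj, ne_eq, Prod.ext_iff, Fin.ext_iff, hi,
    mul_inv_eq_iff_eq_mul]
  grind

theorem adj_iff_of_val_eq_one (hi : i.val = 1) :
    (DeltaCyc G m x δ).Adj (g, i) (h, j) ↔
      (j.val = 0 ∧ g = x * h) ∨ (j.val = 1 ∧ h ≠ g) ∨ (j.val = 2 ∧ h = x ^ δ * g) ∨
        (j.val = 4 ∧ h ≠ g) := by
  simp only [DeltaCyc, SimpleGraph.fromRel_adj, ne_eq, Prod.ext_iff, Fin.ext_iff, hi,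
    mul_inv_eq_iff_eq_mul]
  grind

theorem adj_iff_of_val_eq_two (hi : i.val = 2) :
    (DeltaCyc G m x δ).Adj (g, i) (h, j) ↔
      (j.val = 0 ∧ h ≠ g) ∨ (j.val = 1 ∧ g = x ^ δ * h) ∨ (j.val = 2 ∧ h ≠ g) ∨
        (j.val = 3 ∧ h = g) := by
  simp only [DeltaCyc, SimpleGraph.fromRel_adj, ne_eq, Prod.ext_iff, Fin.ext_iff, hi,
    mul_inv_eq_iff_eq_mul]
  grind

theorem adj_iff_of_val_eq_three (hm : 5 ≤ m) (hi : i.val = 3) :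
    (DeltaCyc G m x δ).Adj (g, i) (h, j) ↔
      j.val = 0 ∨ (j.val = 2 ∧ h = g) ∨ (j.val = m - 1 ∧ h ≠ g) := by
  simp only [DeltaCyc, SimpleGraph.fromRel_adj, ne_eq, Prod.ext_iff, Fin.ext_iff, hi,
    mul_inv_eq_iff_eq_mul]
  grind

theorem adj_iff_of_four_le_val (hx : x ≠ 1) (hi : 4 ≤ i.val) :
    (DeltaCyc G m x δ).Adj (g, i) (h, j) ↔
      (j = i ∧ (h = x * g ∨ g = x * h)) ∨
        ((j.val = lowerBlock i.val ∨ j.val = upperBlock m i.val) ∧ h ≠ g) := by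
  have := i.isLt
  have := j.isLt
  have hxg : ∀ a : G, x * a ≠ a := fun a h => hx (mul_eq_right.mp h)
  simp only [DeltaCyc, SimpleGraph.fromRel_adj, ne_eq, Prod.ext_iff, Fin.ext_iff,
    mul_inv_eq_iff_eq_mul, lowerBlock, upperBlock]
  grind (splits := 40)

theorem exists_lower_block (hx : x ≠ 1) (hi : 4 ≤ i.val) :
    ∃ j : Fin m, j.val < i.val ∧
      (∀ g h : G, (DeltaCyc G m x δ).Adj (g, i) (h, j) ↔ h ≠ g) ∧
      ∀ (h : G) (w : G × Fin m), (DeltaCyc G m x δ).Adj (h, j) w → w.2.val ≤ i.val := by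
  have hi' := i.isLt
  have hl : (i.val = 4 ∧ lowerBlock i.val = 1) ∨ (5 ≤ i.val ∧ lowerBlock i.val = i.val - 1) := by
    unfold lowerBlock; split_ifs <;> omega
  refine ⟨⟨lowerBlock i.val, by omega⟩, by dsimp only; omega, fun g h => ?_,
    fun h ⟨k, l⟩ hw => ?_⟩
  · rw [adj_iff_of_four_le_val hx hi, Fin.ext_iff]
    dsimp only
    grind
  · rcases hl with ⟨hi4, hl⟩ | ⟨hi5, hl⟩
    · rw [adj_iff_of_val_eq_one (by dsimp only; omega)] at hw
      dsimp only
      omega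
    · rw [adj_iff_of_four_le_val hx (by dsimp only; omega), Fin.ext_iff] at hw
      dsimp only at hw ⊢
      simp only [lowerBlock, upperBlock] at hw
      grind

theorem ncard_neighborSet_of_val_eq_zero [Finite G] (hm : 5 ≤ m) (hi : i.val = 0) :
    ((DeltaCyc G m x δ).neighborSet (g, i)).ncard = 2 * Nat.card G := by
  have hcard := Nat.card_pos (α := G)
  have hN : (DeltaCyc G m x δ).neighborSet (g, i) =
      Set.univ ×ˢ {⟨3, by omega⟩} ∪ {g}ᶜ ×ˢ {⟨2, by omega⟩} ∪ {x * g} ×ˢ {⟨1, by omega⟩} := by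
    ext ⟨h, j⟩
    simp [adj_iff_of_val_eq_zero hi, Fin.ext_iff]
    tauto
  rw [hN]
  simp (disch := rintro ⟨_, _⟩; simp [Fin.ext_iff]; grind) only [ncard_union_prod_singleton,
    Set.ncard_prod, Set.ncard_singleton, Set.ncard_univ, ncard_compl_singleton]
  omega

theorem ncard_neighborSet_of_val_eq_one [Finite G] (hm : 5 ≤ m) (hi : i.val = 1) :
    ((DeltaCyc G m x δ).neighborSet (g, i)).ncard = 2 * Nat.card G := by
  have hcard := Nat.card_pos (α := G)
  have hN : (DeltaCyc G m x δ).neighborSet (g, i) =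
      {x⁻¹ * g} ×ˢ {⟨0, by omega⟩} ∪ {g}ᶜ ×ˢ {⟨1, by omega⟩} ∪
        {x ^ δ * g} ×ˢ {⟨2, by omega⟩} ∪ {g}ᶜ ×ˢ {⟨4, by omega⟩} := by
    ext ⟨h, j⟩
    simp [adj_iff_of_val_eq_one hi, Fin.ext_iff, eq_inv_mul_iff_mul_eq]
    tauto
  rw [hN]
  simp (disch := rintro ⟨_, _⟩; simp [Fin.ext_iff]; grind) only [ncard_union_prod_singleton,
    Set.ncard_prod, Set.ncard_singleton, ncard_compl_singleton]
  omega

theorem ncard_neighborSet_of_val_eq_two [Finite G] (hm : 5 ≤ m) (hi : i.val = 2) :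
    ((DeltaCyc G m x δ).neighborSet (g, i)).ncard = 2 * Nat.card G := by
  have hcard := Nat.card_pos (α := G)
  have hN : (DeltaCyc G m x δ).neighborSet (g, i) =
      {g}ᶜ ×ˢ {⟨0, by omega⟩} ∪ {(x ^ δ)⁻¹ * g} ×ˢ {⟨1, by omega⟩} ∪
        {g}ᶜ ×ˢ {⟨2, by omega⟩} ∪ {g} ×ˢ {⟨3, by omega⟩} := by
    ext ⟨h, j⟩
    simp [adj_iff_of_val_eq_two hi, Fin.ext_iff, eq_inv_mul_iff_mul_eq]
    tauto
  rw [hN]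
  simp (disch := rintro ⟨_, _⟩; simp [Fin.ext_iff]; grind) only [ncard_union_prod_singleton,
    Set.ncard_prod, Set.ncard_singleton, ncard_compl_singleton]
  omega

theorem ncard_neighborSet_of_val_eq_three [Finite G] (hm : 5 ≤ m) (hi : i.val = 3) :
    ((DeltaCyc G m x δ).neighborSet (g, i)).ncard = 2 * Nat.card G := by
  have hcard := Nat.card_pos (α := G)
  have hN : (DeltaCyc G m x δ).neighborSet (g, i) =
      Set.univ ×ˢ {⟨0, by omega⟩} ∪ {g} ×ˢ {⟨2, by omega⟩} ∪
        {g}ᶜ ×ˢ {⟨m - 1, by omega⟩} := by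
    ext ⟨h, j⟩
    simp [adj_iff_of_val_eq_three hm hi, Fin.ext_iff]
    tauto
  rw [hN]
  simp (disch := rintro ⟨_, _⟩; simp [Fin.ext_iff]; grind) only [ncard_union_prod_singleton,
    Set.ncard_prod, Set.ncard_singleton, Set.ncard_univ, ncard_compl_singleton]
  omega

theorem ncard_neighborSet_of_four_le_val [Finite G] (hx2 : x * x ≠ 1) (hi : 4 ≤ i.val) :
    ((DeltaCyc G m x δ).neighborSet (g, i)).ncard = 2 * Nat.card G := by
  have hcard := Nat.card_pos (α := G)
  have hx : x ≠ 1 := fun h1 => hx2 (by simp [h1])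
  have hi' := i.isLt
  have hl : lowerBlock i.val < i.val := by unfold lowerBlock; split_ifs <;> omega
  have hu : upperBlock m i.val < m ∧ upperBlock m i.val ≠ i.val ∧
      upperBlock m i.val ≠ lowerBlock i.val := by
    unfold upperBlock lowerBlock; split_ifs <;> omega
  have hN : (DeltaCyc G m x δ).neighborSet (g, i) =
      {x * g, x⁻¹ * g} ×ˢ {i} ∪ {g}ᶜ ×ˢ {⟨lowerBlock i.val, by omega⟩} ∪
        {g}ᶜ ×ˢ {⟨upperBlock m i.val, hu.1⟩} := by
    ext ⟨h, j⟩
    simp [adj_iff_of_four_le_val hx hi, Fin.ext_iff, eq_inv_mul_iff_mul_eq]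
    tauto
  rw [hN]
  simp (disch := rintro ⟨_, _⟩; simp [Fin.ext_iff]; grind) only [ncard_union_prod_singleton,
    Set.ncard_prod, Set.ncard_singleton, ncard_compl_singleton]
  rw [Set.ncard_pair fun h => hx2 (inv_eq_iff_mul_eq_one.mp (mul_right_cancel h).symm)]
  omega

theorem ncard_neighborSet [Finite G] (hx2 : x * x ≠ 1) (hm : 5 ≤ m) (v : G × Fin m) :
    ((DeltaCyc G m x δ).neighborSet v).ncard = 2 * Nat.card G := by
  obtain ⟨g, i⟩ := v
  rcases (by omega : i.val = 0 ∨ i.val = 1 ∨ i.val = 2 ∨ i.val = 3 ∨ 4 ≤ i.val)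
    with hi | hi | hi | hi | hi
  · exact ncard_neighborSet_of_val_eq_zero hm hi
  · exact ncard_neighborSet_of_val_eq_one hm hi
  · exact ncard_neighborSet_of_val_eq_two hm hi
  · exact ncard_neighborSet_of_val_eq_three hm hi
  · exact ncard_neighborSet_of_four_le_val hx2 hi

theorem exists_common_adj_of_val_le_two (hn : 3 ≤ Nat.card G) (hxδ : x ^ δ * x ≠ 1)
    (hm : 5 ≤ m) (hadj : (DeltaCyc G m x δ).Adj (g, i) (h, j))
    (hpair : ¬(h = g ∧ i.val = 0 ∧ j.val = 3)) (hi : i.val ≤ 2) (hij : i.val ≤ j.val) :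
    ∃ w, (DeltaCyc G m x δ).Adj (g, i) w ∧ (DeltaCyc G m x δ).Adj (h, j) w := by
  obtain ⟨c, hcg, hch⟩ := exists_ne_ne_of_three_le_natCard hn g h
  rcases (by omega : i.val = 0 ∨ i.val = 1 ∨ i.val = 2) with hi | hi | hi
  · rw [adj_iff_of_val_eq_zero hi] at hadj
    rcases hadj with hj3 | ⟨hj2, hhg⟩ | ⟨hj1, rfl⟩
    · exact ⟨(h, ⟨2, by omega⟩), by simp [adj_iff_of_val_eq_zero hi]; grind,
        by simp [adj_iff_of_val_eq_three hm hj3]⟩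
    · exact ⟨(h, ⟨3, by omega⟩), by simp [adj_iff_of_val_eq_zero hi],
        by simp [adj_iff_of_val_eq_two hj2]⟩
    · refine ⟨(x ^ δ * (x * g), ⟨2, by omega⟩), ?_, by simp [adj_iff_of_val_eq_one hj1]⟩
      simpa [adj_iff_of_val_eq_zero hi, ← mul_assoc] using hxδ
  · rw [adj_iff_of_val_eq_one hi] at hadj
    rcases hadj with ⟨hj0, -⟩ | ⟨hj1, hhg⟩ | ⟨hj2, rfl⟩ | ⟨hj4, hhg⟩
    · omega
    · exact ⟨(c, ⟨4, by omega⟩), by simp [adj_iff_of_val_eq_one hi, hcg],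
        by simp [adj_iff_of_val_eq_one hj1, hch]⟩
    · refine ⟨(x⁻¹ * g, ⟨0, by omega⟩), by simp [adj_iff_of_val_eq_one hi], ?_⟩
      simpa [adj_iff_of_val_eq_two hj2] using fun h1 => hxδ (by rw [← h1, inv_mul_cancel])
    · have hx : x ≠ 1 := fun h1 => hxδ (by simp [h1])
      exact ⟨(c, ⟨1, by omega⟩), by simp [adj_iff_of_val_eq_one hi, hcg],
        by simp [adj_iff_of_four_le_val hx (i := j) (by omega), hj4, lowerBlock, hch]⟩
  · rw [adj_iff_of_val_eq_two hi] at hadj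
    rcases hadj with ⟨hj0, -⟩ | ⟨hj1, -⟩ | ⟨hj2, hhg⟩ | ⟨hj3, rfl⟩
    · omega
    · omega
    · exact ⟨(c, ⟨0, by omega⟩), by simp [adj_iff_of_val_eq_two hi, hcg],
        by simp [adj_iff_of_val_eq_two hj2, hch]⟩
    · exact ⟨(c, ⟨0, by omega⟩), by simp [adj_iff_of_val_eq_two hi, hcg],
        by simp [adj_iff_of_val_eq_three hm hj3]⟩

theorem exists_common_adj_of_three_le_val (hn : 3 ≤ Nat.card G) (hx2 : x * x ≠ 1)
    (hm : 5 ≤ m) (hadj : (DeltaCyc G m x δ).Adj (g, i) (h, j)) (hi : 3 ≤ i.val)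
    (hij : i.val ≤ j.val) :
    ∃ w, (DeltaCyc G m x δ).Adj (g, i) w ∧ (DeltaCyc G m x δ).Adj (h, j) w := by
  have hx : x ≠ 1 := fun h1 => hx2 (by simp [h1])
  have hj := j.isLt
  obtain ⟨k, hkg, hkh⟩ := exists_ne_and_cycle_adj hx2 g h
  have hkj (hj4 : 4 ≤ j.val) : (DeltaCyc G m x δ).Adj (h, j) (k, j) :=
    (adj_iff_of_four_le_val hx hj4).2 (Or.inl ⟨rfl, hkh⟩)
  rcases (by omega : i.val = 3 ∨ 4 ≤ i.val) with hi | hi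
  · rw [adj_iff_of_val_eq_three hm hi] at hadj
    rcases hadj with hj0 | ⟨hj2, -⟩ | ⟨hjm, -⟩
    · omega
    · omega
    · exact ⟨(k, j), by simp [adj_iff_of_val_eq_three hm hi, hjm, hkg], hkj (by omega)⟩
  · rw [adj_iff_of_four_le_val hx hi] at hadj
    rcases hadj with ⟨rfl, -⟩ | ⟨hji, -⟩
    · obtain ⟨c, hcg, hch⟩ := exists_ne_ne_of_three_le_natCard hn g h
      obtain ⟨l, -, hl, -⟩ := exists_lower_block (δ := δ) hx hi
      exact ⟨(c, l), (hl g c).2 hcg, (hl h c).2 hch⟩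
    · exact ⟨(k, j), (adj_iff_of_four_le_val hx hi).2 (Or.inr ⟨hji, hkg⟩), hkj (by omega)⟩

theorem exists_common_adj (hn : 3 ≤ Nat.card G) (hx2 : x * x ≠ 1)
    (hxδ : x ^ δ * x ≠ 1) (hm : 5 ≤ m) (hadj : (DeltaCyc G m x δ).Adj (g, i) (h, j))
    (hpair : ¬(h = g ∧ (i.val = 0 ∧ j.val = 3 ∨ i.val = 3 ∧ j.val = 0))) :
    ∃ w, (DeltaCyc G m x δ).Adj (g, i) w ∧ (DeltaCyc G m x δ).Adj (h, j) w := by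
  wlog hij : i.val ≤ j.val generalizing g h i j
  · obtain ⟨w, hw⟩ := this hadj.symm (by grind) (by omega)
    exact ⟨w, hw.2, hw.1⟩
  rcases le_or_gt i.val 2 with hi | hi
  · exact exists_common_adj_of_val_le_two hn hxδ hm hadj (by grind) hi hij
  · exact exists_common_adj_of_three_le_val hn hx2 hm hadj hi hij

theorem adj_and_commonNeighbors_eq_empty_iff (hn : 3 ≤ Nat.card G)
    (hx2 : x * x ≠ 1) (hxδ : x ^ δ * x ≠ 1) (hm : 5 ≤ m) (p q : G × Fin m) :
    ((DeltaCyc G m x δ).Adj p q ∧ (DeltaCyc G m x δ).commonNeighbors p q = ∅) ↔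
      q.1 = p.1 ∧ (p.2.val = 0 ∧ q.2.val = 3 ∨ p.2.val = 3 ∧ q.2.val = 0) := by
  obtain ⟨g, i⟩ := p
  obtain ⟨h, j⟩ := q
  simp only [Set.eq_empty_iff_forall_notMem, SimpleGraph.mem_commonNeighbors]
  constructor
  · rintro ⟨hadj, hno⟩
    by_contra hpair
    obtain ⟨w, hw⟩ := exists_common_adj hn hx2 hxδ hm hadj hpair
    exact hno w hw
  · rintro ⟨rfl, hij⟩
    refine ⟨?_, fun ⟨k, l⟩ hk => ?_⟩
    · rcases hij with ⟨hi, hj⟩ | ⟨hi, hj⟩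
      · simp [adj_iff_of_val_eq_zero hi, hj]
      · simp [adj_iff_of_val_eq_three hm hi, hj]
    rcases hij with ⟨hi, hj⟩ | ⟨hi, hj⟩
    · rw [adj_iff_of_val_eq_zero hi, adj_iff_of_val_eq_three hm hj] at hk
      grind
    · rw [adj_iff_of_val_eq_three hm hi, adj_iff_of_val_eq_zero hj] at hk
      grind

theorem adj_and_commonNeighbors_subset_iff (hn : 3 ≤ Nat.card G)
    (hx2 : x * x ≠ 1) (hxδ : x ^ δ * x ≠ 1) (hm : 5 ≤ m) {v w : G × Fin m}
    (hv : v ∈ blocks G m {0, 3}) (hw : w ∉ blocks G m {0, 3}) :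
    ((DeltaCyc G m x δ).Adj v w ∧
        (DeltaCyc G m x δ).commonNeighbors v w ⊆ blocks G m {0, 3}) ↔
      v.2.val = 3 ∧ w.1 = v.1 ∧ w.2.val = 2 := by
  have hx : x ≠ 1 := fun h1 => hx2 (by simp [h1])
  obtain ⟨g, i⟩ := v
  obtain ⟨h, j⟩ := w
  simp only [blocks, Set.mem_ofPred_eq, Set.mem_insert_iff, Set.mem_singleton_iff] at hv hw
  simp only [Set.subset_def, SimpleGraph.mem_commonNeighbors, blocks, Set.mem_ofPred_eq,
    Set.mem_insert_iff, Set.mem_singleton_iff]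
  constructor
  · rintro ⟨hadj, hsub⟩
    rcases hv with hi | hi
    · exfalso
      rw [adj_iff_of_val_eq_zero hi] at hadj
      rcases hadj with hj | ⟨hj, hhg⟩ | ⟨hj, rfl⟩
      · exact hw (Or.inr hj)
      · obtain ⟨c, hcg, hch⟩ := exists_ne_ne_of_three_le_natCard hn g h
        have := hsub (c, ⟨2, by omega⟩) ⟨by simp [adj_iff_of_val_eq_zero hi, hcg],
          by simp [adj_iff_of_val_eq_two hj, hch]⟩
        simp at this
      · have := hsub (x ^ δ * (x * g), ⟨2, by omega⟩)
          ⟨by simpa [adj_iff_of_val_eq_zero hi, ← mul_assoc] using hxδ,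
            by simp [adj_iff_of_val_eq_one hj]⟩
        simp at this
    · rw [adj_iff_of_val_eq_three hm hi] at hadj
      rcases hadj with hj | ⟨hj, rfl⟩ | ⟨hj, hhg⟩
      · exact (hw (Or.inl hj)).elim
      · exact ⟨hi, rfl, hj⟩
      · exfalso
        obtain ⟨k, hkg, hkh⟩ := exists_ne_and_cycle_adj hx2 g h
        exact hw (hsub (k, j) ⟨by simp [adj_iff_of_val_eq_three hm hi, hj, hkg],
          by simp [adj_iff_of_four_le_val hx (i := j) (by omega), hkh]⟩)
  · rintro ⟨hi, rfl, hj⟩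
    refine ⟨by simp [adj_iff_of_val_eq_three hm hi, hj], fun ⟨k, l⟩ hk => ?_⟩
    rw [adj_iff_of_val_eq_three hm hi, adj_iff_of_val_eq_two hj] at hk
    grind

theorem adj_and_not_mem_blocks_iff {w : G × Fin m} (hi : i.val = 0) (hj : j.val = 1) :
    ((DeltaCyc G m x δ).Adj (g, i) w ∧ w ∉ blocks G m {0, 2, 3}) ↔ w = (x * g, j) := by
  obtain ⟨h, l⟩ := w
  simp only [adj_iff_of_val_eq_zero hi, blocks, Set.mem_ofPred_eq, Set.mem_insert_iff,
    Set.mem_singleton_iff, Prod.mk.injEq, Fin.ext_iff, hj]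
  grind

section Rigidity

variable {σ : Equiv.Perm (G × Fin m)}

theorem apply_mem_blocks_zero_three_iff (hn : 3 ≤ Nat.card G) (hx2 : x * x ≠ 1)
    (hxδ : x ^ δ * x ≠ 1) (hm : 5 ≤ m) (hσ : IsGraphAut (DeltaCyc G m x δ) σ)
    (v : G × Fin m) : σ v ∈ blocks G m {0, 3} ↔ v ∈ blocks G m {0, 3} := by
  refine hσ.apply_iff (P := (· ∈ blocks G m {0, 3})) (fun τ hτ v hv => ?_) v
  simp only [blocks, Set.mem_ofPred_eq, Set.mem_insert_iff, Set.mem_singleton_iff] at hv ⊢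
  have hpartner := (adj_and_commonNeighbors_eq_empty_iff hn hx2 hxδ hm v
    (v.1, ⟨3 - v.2.val, by omega⟩)).2 ⟨rfl, by dsimp only; omega⟩
  have := (adj_and_commonNeighbors_eq_empty_iff hn hx2 hxδ hm _ _).1
    ((hτ.adj_and_commonNeighbors_eq_empty_iff _ _).2 hpartner)
  omega

theorem apply_of_val_eq_three (hn : 3 ≤ Nat.card G) (hx2 : x * x ≠ 1)
    (hxδ : x ^ δ * x ≠ 1) (hm : 5 ≤ m) (hσ : IsGraphAut (DeltaCyc G m x δ) σ)
    {g : G} {i j : Fin m} (hi : i.val = 3) (hj : j.val = 2) :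
    (σ (g, i)).2 = i ∧ σ (g, j) = ((σ (g, i)).1, j) := by
  have hS := apply_mem_blocks_zero_three_iff hn hx2 hxδ hm hσ
  have himage : σ '' blocks G m {0, 3} = blocks G m {0, 3} := by
    ext v
    rw [σ.image_eq_preimage_symm, Set.mem_preimage, ← hS, Equiv.apply_symm_apply]
  have hv : (g, i) ∈ blocks G m {0, 3} := by simp [blocks, hi]
  have hw : (g, j) ∉ blocks G m {0, 3} := by simp [blocks, hj]
  have hprivate := (adj_and_commonNeighbors_subset_iff hn hx2 hxδ hm hv hw).2 ⟨hi, rfl, hj⟩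
  obtain ⟨hi', h1, hj'⟩ := (adj_and_commonNeighbors_subset_iff hn hx2 hxδ hm
    ((hS _).2 hv) (mt (hS _).1 hw)).1
      ((hσ.adj_and_commonNeighbors_subset_iff himage _ _).2 hprivate)
  exact ⟨Fin.ext (hi'.trans hi.symm), Prod.ext h1 (Fin.ext (hj'.trans hj.symm))⟩

theorem apply_of_val_eq_zero (hn : 3 ≤ Nat.card G) (hx2 : x * x ≠ 1)
    (hxδ : x ^ δ * x ≠ 1) (hm : 5 ≤ m) (hσ : IsGraphAut (DeltaCyc G m x δ) σ)
    {g : G} {i j : Fin m} (hi : i.val = 3) (hj : j.val = 0) :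
    σ (g, j) = ((σ (g, i)).1, j) := by
  have hpair := (adj_and_commonNeighbors_eq_empty_iff hn hx2 hxδ hm (g, j) (g, i)).2
    ⟨rfl, Or.inl ⟨hj, hi⟩⟩
  have := (adj_and_commonNeighbors_eq_empty_iff hn hx2 hxδ hm _ _).1
    ((hσ.adj_and_commonNeighbors_eq_empty_iff _ _).2 hpair)
  rw [(apply_of_val_eq_three hn hx2 hxδ hm hσ (j := ⟨2, by omega⟩) hi rfl).1] at this
  exact Prod.ext this.1.symm (Fin.ext (by dsimp only; omega))

theorem apply_mem_blocks_zero_two_three_iff (hn : 3 ≤ Nat.card G) (hx2 : x * x ≠ 1)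
    (hxδ : x ^ δ * x ≠ 1) (hm : 5 ≤ m) (hσ : IsGraphAut (DeltaCyc G m x δ) σ)
    (v : G × Fin m) : σ v ∈ blocks G m {0, 2, 3} ↔ v ∈ blocks G m {0, 2, 3} := by
  refine hσ.apply_iff (P := (· ∈ blocks G m {0, 2, 3})) (fun τ hτ ⟨g, j⟩ hj => ?_) v
  have h3 : (⟨3, by omega⟩ : Fin m).val = 3 := rfl
  simp only [blocks, Set.mem_ofPred_eq, Set.mem_insert_iff, Set.mem_singleton_iff] at hj ⊢
  rcases hj with hj | hj | hj
  · rw [apply_of_val_eq_zero hn hx2 hxδ hm hτ h3 hj]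
    exact Or.inl hj
  · rw [(apply_of_val_eq_three hn hx2 hxδ hm hτ h3 hj).2]
    exact Or.inr (Or.inl hj)
  · rw [(apply_of_val_eq_three hn hx2 hxδ hm hτ hj (j := ⟨2, by omega⟩) rfl).1]
    exact Or.inr (Or.inr hj)

theorem apply_mul_of_val_eq_one (hn : 3 ≤ Nat.card G) (hx2 : x * x ≠ 1)
    (hxδ : x ^ δ * x ≠ 1) (hm : 5 ≤ m) (hσ : IsGraphAut (DeltaCyc G m x δ) σ)
    {g : G} {i j : Fin m} (hi : i.val = 3) (hj : j.val = 1) :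
    σ (x * g, j) = (x * (σ (g, i)).1, j) := by
  have h0 : (⟨0, by omega⟩ : Fin m).val = 0 := rfl
  have hT := apply_mem_blocks_zero_two_three_iff hn hx2 hxδ hm hσ
  obtain ⟨hadj, hnot⟩ := (adj_and_not_mem_blocks_iff (g := g) (δ := δ) h0 hj).2 rfl
  rw [← hσ, apply_of_val_eq_zero hn hx2 hxδ hm hσ hi h0] at hadj
  exact (adj_and_not_mem_blocks_iff h0 hj).1 ⟨hadj, mt (hT _).1 hnot⟩

theorem apply_mul_of_val_eq_three (hn : 3 ≤ Nat.card G) (hx2 : x * x ≠ 1)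
    (hxδ : x ^ δ * x ≠ 1) (hm : 5 ≤ m) (hσ : IsGraphAut (DeltaCyc G m x δ) σ)
    {i : Fin m} (hi : i.val = 3) (g : G) :
    (σ (x ^ δ * x * g, i)).1 = x ^ δ * x * (σ (g, i)).1 := by
  have h1 : (⟨1, by omega⟩ : Fin m).val = 1 := rfl
  have h2 : (⟨2, by omega⟩ : Fin m).val = 2 := rfl
  have hadj : (DeltaCyc G m x δ).Adj (x * g, ⟨1, by omega⟩) (x ^ δ * x * g, ⟨2, by omega⟩) := by
    simp [adj_iff_of_val_eq_one h1, mul_assoc]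
  rw [← hσ, apply_mul_of_val_eq_one hn hx2 hxδ hm hσ hi h1,
    (apply_of_val_eq_three hn hx2 hxδ hm hσ hi h2).2, adj_iff_of_val_eq_one h1] at hadj
  simpa [mul_assoc] using hadj

theorem exists_apply_eq_mul_of_val_lt_four [Finite G] (hn : 3 ≤ Nat.card G) (hx2 : x * x ≠ 1)
    (hy : Subgroup.zpowers (x ^ δ * x) = ⊤) (hm : 5 ≤ m)
    (hσ : IsGraphAut (DeltaCyc G m x δ) σ) :
    ∃ a : G, ∀ v : G × Fin m, v.2.val < 4 → σ v = (v.1 * a, v.2) := by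
  have hxδ : x ^ δ * x ≠ 1 := fun h1 => by
    rw [h1, Subgroup.zpowers_one_eq_bot] at hy
    have := Subgroup.card_bot (G := G)
    rw [hy, Subgroup.card_top] at this
    omega
  let i₃ : Fin m := ⟨3, by omega⟩
  have hφ := eq_mul_apply_one_of_apply_mul_left hy (φ := fun g => (σ (g, i₃)).1)
    (apply_mul_of_val_eq_three hn hx2 hxδ hm hσ rfl)
  refine ⟨(σ (1, i₃)).1, ?_⟩
  rintro ⟨g, j⟩ (hj : j.val < 4)
  rcases (by omega : j.val = 0 ∨ j.val = 1 ∨ j.val = 2 ∨ j.val = 3) with hj | hj | hj | hj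
  · rw [apply_of_val_eq_zero hn hx2 hxδ hm hσ (i := i₃) rfl hj, hφ]
  · have := apply_mul_of_val_eq_one hn hx2 hxδ hm hσ (g := x⁻¹ * g) (i := i₃) rfl hj
    rw [mul_inv_cancel_left] at this
    rw [this, hφ, ← mul_assoc, mul_inv_cancel_left]
  · rw [(apply_of_val_eq_three hn hx2 hxδ hm hσ (i := i₃) rfl hj).2, hφ]
  · obtain rfl : j = i₃ := Fin.ext hj
    exact Prod.ext (hφ g) (apply_of_val_eq_three hn hx2 hxδ hm hσ (j := ⟨2, by omega⟩) rfl rfl).1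

theorem apply_eq_mul_of_forall_val_lt (hn : 3 ≤ Nat.card G) (hx : x ≠ 1)
    (hσ : IsGraphAut (DeltaCyc G m x δ) σ) (a : G) {k : Fin m} (hk : 4 ≤ k.val)
    (hlow : ∀ v : G × Fin m, v.2.val < k.val → σ v = (v.1 * a, v.2)) (g : G) :
    σ (g, k) = (g * a, k) := by
  obtain ⟨j, hjk, hadj, hle⟩ := exists_lower_block (δ := δ) hx hk
  obtain ⟨c, hcg, -⟩ := exists_ne_ne_of_three_le_natCard hn g g
  have hle_k : (σ (g, k)).2.val ≤ k.val := by
    have h := (hσ (g, k) (c, j)).2 ((hadj g c).2 hcg)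
    rw [hlow (c, j) hjk] at h
    exact hle _ _ h.symm
  have hblock : (σ (g, k)).2 = k := by
    refine Fin.ext (le_antisymm hle_k (not_lt.1 fun hlt => ?_))
    have h := hlow ((σ (g, k)).1 * a⁻¹, (σ (g, k)).2) hlt
    rw [inv_mul_cancel_right, Prod.mk.eta, σ.injective.eq_iff] at h
    exact hlt.ne (congrArg (·.2.val) h)
  have hpair : σ (g, k) = ((σ (g, k)).1, k) := Prod.ext rfl hblock
  have hnot := (hσ (g, k) (g, j)).not.2 (by rw [hadj]; exact not_not.2 rfl)
  rw [hlow (g, j) hjk, hpair, hadj, not_not] at hnot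
  rw [hpair, hnot]

theorem exists_apply_eq_mul [Finite G] (hn : 3 ≤ Nat.card G) (hx2 : x * x ≠ 1)
    (hy : Subgroup.zpowers (x ^ δ * x) = ⊤) (hm : 5 ≤ m)
    (hσ : IsGraphAut (DeltaCyc G m x δ) σ) :
    ∃ a : G, ∀ v : G × Fin m, σ v = (v.1 * a, v.2) := by
  have hx : x ≠ 1 := fun h1 => hx2 (by simp [h1])
  obtain ⟨a, ha⟩ := exists_apply_eq_mul_of_val_lt_four hn hx2 hy hm hσ
  suffices ∀ k, 4 ≤ k → k ≤ m → ∀ v : G × Fin m, v.2.val < k → σ v = (v.1 * a, v.2) from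
    ⟨a, fun v => this m (by omega) le_rfl v v.2.isLt⟩
  intro k hk
  induction k, hk using Nat.le_induction with
  | base => exact fun _ => ha
  | succ k hk ih =>
    rintro hkm ⟨g, l⟩ (hl : l.val < k + 1)
    rcases Nat.lt_succ_iff_lt_or_eq.1 hl with hl | hl
    · exact ih (by omega) _ hl
    · exact apply_eq_mul_of_forall_val_lt hn hx hσ a (by omega)
        (fun w hw => ih (by omega) w (by omega)) g

end Rigidity

end DeltaCyc

theorem statement_13_general (G : Type*) [Group G] [Finite G]
    (x : G) (hx : Subgroup.zpowers x = ⊤) (hn : 3 ≤ Nat.card G)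
    (m : ℕ) (hm : 5 ≤ m)
    (δ : ℕ) (hgcd : Nat.gcd (1 + δ) (Nat.card G) = 1) :
    ((∀ (g : G) (p q : G × Fin m),
        (DeltaCyc G m x δ).Adj (p.1 * g, p.2) (q.1 * g, q.2) ↔
          (DeltaCyc G m x δ).Adj p q) ∧
      (∀ σ : Equiv.Perm (G × Fin m), IsGraphAut (DeltaCyc G m x δ) σ →
        ∃ g : G, ∀ p : G × Fin m, σ p = (p.1 * g, p.2))) ∧
    HasMGRR G m := by
  have hx2 : x * x ≠ 1 := by
    rw [← pow_two]
    exact pow_ne_one_of_lt_orderOf two_ne_zero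
      (by rw [orderOf_eq_card_of_zpowers_eq_top hx]; omega)
  have hy : Subgroup.zpowers (x ^ δ * x) = ⊤ := by
    rw [← pow_succ]
    exact zpowers_pow_eq_top_of_coprime hx (by rwa [Nat.Coprime, add_comm])
  have hrigid := fun σ => DeltaCyc.exists_apply_eq_mul (σ := σ) hn hx2 hy hm
  exact ⟨⟨DeltaCyc.adj_mul_right_iff, hrigid⟩, hasMGRR_of_forall_isGraphAut (by omega) _ _
    (DeltaCyc.ncard_neighborSet hx2 hm) DeltaCyc.adj_mul_right_iff hrigid⟩

/-- for a cyclic group `G = ⟨x⟩` of order `n ≥ 3` and `m ≥ 5`, the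
automorphism group of `Δ` is exactly the group of right translations by `G`; in
particular `G` has an m-GRR. -/
theorem statement_13 (G : Type*) [Group G] [Finite G]
    (x : G) (hx : Subgroup.zpowers x = ⊤) (hn : 3 ≤ Nat.card G)
    (m : ℕ) (hm : 5 ≤ m)
    (δ : ℕ) (hδ : δ ≤ Nat.card G - 1) (hgcd : Nat.gcd (1 + δ) (Nat.card G) = 1) :
    ((∀ (g : G) (p q : G × Fin m),
        (DeltaCyc G m x δ).Adj (p.1 * g, p.2) (q.1 * g, q.2) ↔
          (DeltaCyc G m x δ).Adj p q) ∧
      (∀ σ : Equiv.Perm (G × Fin m), IsGraphAut (DeltaCyc G m x δ) σ →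
        ∃ g : G, ∀ p : G × Fin m, σ p = (p.1 * g, p.2))) ∧
    HasMGRR G m :=
  statement_13_general G x hx hn m hm δ hgcd
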